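/- Let $1<p<q<\infty$, $n\ge 1$, and $\alpha<n(p-1)$. Define $C(p,q,n,\alpha)=\omega_{n-1}^{1+\frac{1}{q}-\frac{1}{p}}\left(\frac{p-1}{n(p-1)-\alpha}\right)^{\frac{1}{p'}+\frac{1}{q}}\left(\frac{p'}{q}\right)^{\frac{1}{p}}\left(\frac{\frac{q-p}{p}\Gamma\left(\frac{pq}{q-p}\right)}{\Gamma\left(\frac{p}{q-p}\right)\Gamma\left(\frac{p(q-1)}{q-p}\right)}\right)^{\frac{1}{p}-\frac{1}{q}}$, where $\omega_{n-1}>0$ and $p'=p/(p-1)$. Then $\lim_{q\to p^+} C(p,q,n,\alpha)=\frac{p\,\omega_{n-1}}{n(p-1)-\alpha}$. -/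

import Mathlib

/-!
Put `t = q - p`, `a = p / t` and `b = p (q - 1) / t`. Then `a + b = p q / t`,
`1 / (a + b) = 1 / p - 1 / q` and `a / (a + b) = 1 / q`, so the Gamma factor of the constant is
`(t / p) ^ (1 / (a + b))`, which tends to `1` because `t log t → 0`, times
`(Γ(a + b) / (Γ(a) Γ(b))) ^ (1 / (a + b))`. The crude Stirling estimate
`log Γ(x) = x log x - x + O(log x)` shows that the latter tends to `exp (H (1 / p))`, where `H` is
the binary entropy: the terms `x log x` recombine into `(a + b) H (a / (a + b))` and the
errors are `o(a + b)`. The other factors are continuous at `q = p`, and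
`exp (H (1 / p)) = p ^ (1 / p) (p / (p - 1)) ^ (1 - 1 / p)` makes the product
`p ω / (n (p - 1) - α)`.
-/

open Set Filter Real Topology Asymptotics
open scoped Nat

namespace Stirling

theorem mul_log_sub_le_log_factorial (n : ℕ) : n * log n - n ≤ log n ! := by
  rcases eq_or_ne n 0 with rfl | hn
  · simp
  have h2π : 0 ≤ log (2 * π) := log_nonneg (by linarith [pi_gt_three])
  linarith [le_log_factorial_stirling hn, log_natCast_nonneg n]

theorem log_factorial_le_mul_log_sub_add {n : ℕ} (hn : n ≠ 0) :
    log n ! ≤ n * log n - n + log n / 2 + 1 := by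
  obtain ⟨m, rfl⟩ := Nat.exists_eq_succ_of_ne_zero hn
  have hanti : log (stirlingSeq (m + 1)) ≤ log (stirlingSeq 1) :=
    log_stirlingSeq'_antitone (Nat.zero_le m)
  have hm : (0 : ℝ) < (m + 1 : ℕ) := by positivity
  rw [log_stirlingSeq_formula, stirlingSeq_one, log_div (exp_pos 1).ne' (by positivity), log_exp,
    log_sqrt zero_le_two, log_mul two_ne_zero hm.ne', log_div hm.ne' (exp_pos 1).ne',
    log_exp] at hanti
  linarith

end Stirling

theorem monotoneOn_mul_log_sub_self : MonotoneOn (fun x => x * log x - x) (Ici 1) := by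
  intro x (hx : 1 ≤ x) y _ hxy
  have h := intervalIntegral.integral_nonneg (μ := MeasureTheory.volume) hxy
    fun t ht => log_nonneg (hx.trans ht.1)
  rw [integral_log] at h
  linarith

noncomputable def stirlingRemainder (x : ℝ) : ℝ := log (Gamma x) - (x * log x - x)

/-- Sandwich `Γ x` between `Γ ⌊x⌋ = ⌊x⌋! / ⌊x⌋` and `Γ (⌊x⌋ + 1) = ⌊x⌋!` (`Γ` is monotone on
`[2, ∞)`) and apply Stirling's bounds to `⌊x⌋!` and `(⌊x⌋ + 1)!`. -/
theorem abs_stirlingRemainder_le {x : ℝ} (hx : 2 ≤ x) : |stirlingRemainder x| ≤ 2 * log x + 1 := by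
  set n := ⌊x⌋₊
  have hn : 2 ≤ n := Nat.le_floor (by exact_mod_cast hx)
  have hn' : (2 : ℝ) ≤ n := by exact_mod_cast hn
  have hnx : (n : ℝ) ≤ x := Nat.floor_le (by linarith)
  have hxn : x < n + 1 := Nat.lt_floor_add_one x
  have hΓn : Gamma n ≤ Gamma x := Gamma_strictMonoOn_Ici.monotoneOn hn' (hn'.trans hnx) hnx
  have hΓx : Gamma x ≤ n ! := by
    rw [← Gamma_nat_eq_factorial]
    exact Gamma_strictMonoOn_Ici.monotoneOn hx (mem_Ici.2 (by linarith)) hxn.le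
  have hΓ_pos : 0 < Gamma n := Gamma_pos_of_pos (by linarith)
  have hfac : log n ! = log n + log (Gamma n) := by
    rw [← Gamma_nat_eq_factorial, Gamma_add_one (by positivity), log_mul (by positivity) hΓ_pos.ne']
  have hfac_succ : log (n + 1)! = log (n + 1) + log n ! := by
    rw [Nat.factorial_succ, Nat.cast_mul, log_mul (by positivity) (by positivity)]; push_cast; ring
  have hlog_succ : log (n + 1) ≤ log x + 1 := by
    have := log_le_log (by positivity) (show (n : ℝ) + 1 ≤ 2 * x by linarith)
    rw [log_mul two_ne_zero (by positivity)] at this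
    linarith [log_two_lt_d9]
  have hlog_n : log n ≤ log x := log_le_log (by positivity) hnx
  have hlogx : 0 ≤ log x := log_nonneg (by linarith)
  have hupper : log (Gamma x) ≤ log n ! := log_le_log (by positivity) hΓx
  have hlower : log (Gamma n) ≤ log (Gamma x) := log_le_log hΓ_pos hΓn
  have hg_lower : n * log n - n ≤ x * log x - x :=
    monotoneOn_mul_log_sub_self (mem_Ici.2 (by linarith)) (mem_Ici.2 (by linarith)) hnx
  have hg_upper : x * log x - x ≤ (n + 1) * log (n + 1) - (n + 1) :=
    monotoneOn_mul_log_sub_self (mem_Ici.2 (by linarith)) (mem_Ici.2 (by linarith)) hxn.le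
  have hstir := Stirling.log_factorial_le_mul_log_sub_add (n := n) (by omega)
  have hstir_succ := Stirling.mul_log_sub_le_log_factorial (n + 1)
  push_cast at hstir_succ
  rw [stirlingRemainder, abs_le]
  constructor <;> linarith

theorem tendsto_stirlingRemainder_div_atTop :
    Tendsto (fun x => stirlingRemainder x / x) atTop (𝓝 0) := by
  have hlog : Tendsto (fun x => (2 * log x + 1) / x) atTop (𝓝 0) := by
    simpa using ((isLittleO_log_id_atTop.const_mul_left 2).add
      (isLittleO_const_id_atTop (1 : ℝ))).tendsto_div_nhds_zero
  refine squeeze_zero_norm' ?_ hlog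
  filter_upwards [eventually_ge_atTop 2] with x hx
  rw [norm_div, norm_of_nonneg (by linarith : (0:ℝ) ≤ x)]
  exact div_le_div_of_nonneg_right (abs_stirlingRemainder_le hx) (by linarith)

theorem log_Gamma_add_div_Gamma_mul_Gamma_div_add {a b : ℝ} (ha : 0 < a) (hb : 0 < b) :
    log (Gamma (a + b) / (Gamma a * Gamma b)) / (a + b) =
      binEntropy (a / (a + b)) + stirlingRemainder (a + b) / (a + b)
        - stirlingRemainder a / a * (a / (a + b))
        - stirlingRemainder b / b * (1 - a / (a + b)) := by
  have hab : 0 < a + b := by linarith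
  have h1 : 1 - a / (a + b) = b / (a + b) := by field_simp; ring
  rw [binEntropy, h1, inv_div, inv_div, log_div hab.ne' ha.ne', log_div hab.ne' hb.ne',
    log_div (Gamma_pos_of_pos hab).ne' (mul_pos (Gamma_pos_of_pos ha) (Gamma_pos_of_pos hb)).ne',
    log_mul (Gamma_pos_of_pos ha).ne' (Gamma_pos_of_pos hb).ne']
  unfold stirlingRemainder
  field_simp
  ring

theorem tendsto_Gamma_add_div_Gamma_mul_Gamma_rpow {ι : Type*} {l : Filter ι} {a b : ι → ℝ} {θ : ℝ}
    (ha : Tendsto a l atTop) (hb : Tendsto b l atTop)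
    (hθ : Tendsto (fun i => a i / (a i + b i)) l (𝓝 θ)) :
    Tendsto (fun i => (Gamma (a i + b i) / (Gamma (a i) * Gamma (b i))) ^ (1 / (a i + b i))) l
      (𝓝 (exp (binEntropy θ))) := by
  have hR := tendsto_stirlingRemainder_div_atTop
  have hlog : Tendsto (fun i => log (Gamma (a i + b i) / (Gamma (a i) * Gamma (b i))) / (a i + b i))
      l (𝓝 (binEntropy θ)) := by
    have hlim := (((binEntropy_continuous.tendsto θ).comp hθ).add
      (hR.comp (ha.atTop_add_atTop hb))).sub ((hR.comp ha).mul hθ) |>.sub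
      ((hR.comp hb).mul (hθ.const_sub 1))
    simp only [zero_mul, add_zero, sub_zero] at hlim
    refine hlim.congr' ?_
    filter_upwards [ha.eventually_gt_atTop 0, hb.eventually_gt_atTop 0] with i hai hbi
    exact (log_Gamma_add_div_Gamma_mul_Gamma_div_add hai hbi).symm
  refine ((continuous_exp.tendsto _).comp hlog).congr' ?_
  filter_upwards [ha.eventually_gt_atTop 0, hb.eventually_gt_atTop 0] with i hai hbi
  rw [Function.comp_apply, rpow_def_of_pos (div_pos (Gamma_pos_of_pos (by linarith))
    (mul_pos (Gamma_pos_of_pos hai) (Gamma_pos_of_pos hbi))), mul_one_div]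

theorem tendsto_sub_div_rpow_inv_sub_inv {p : ℝ} (hp : 0 < p) :
    Tendsto (fun q => ((q - p) / p) ^ (1 / p - 1 / q)) (𝓝[>] p) (𝓝 1) := by
  have hs : Tendsto (fun q => (q - p) / p) (𝓝[>] p) (𝓝 0) := by
    simpa using (((tendsto_id (x := 𝓝 p)).sub_const p).div_const p).mono_left nhdsWithin_le_nhds
  have hinv : Tendsto (fun q : ℝ => 1 / q) (𝓝[>] p) (𝓝 (1 / p)) :=
    (tendsto_const_nhds.div tendsto_id hp.ne').mono_left nhdsWithin_le_nhds
  have hlim := (continuous_exp.tendsto _).comp (((continuous_mul_log.tendsto 0).comp hs).mul hinv)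
  simp only [zero_mul, exp_zero] at hlim
  refine hlim.congr' ?_
  filter_upwards [self_mem_nhdsWithin] with q (hq : p < q)
  have hq0 : 0 < q := hp.trans hq
  rw [Function.comp_apply, Function.comp_apply, rpow_def_of_pos (div_pos (sub_pos.2 hq) hp)]
  congr 1
  field_simp

theorem tendsto_GammaFactor_nhdsGT {p : ℝ} (hp : 1 < p) :
    Tendsto (fun q => (((q - p) / p * Gamma (p * q / (q - p))) /
        (Gamma (p / (q - p)) * Gamma (p * (q - 1) / (q - p)))) ^ (1 / p - 1 / q))
      (𝓝[>] p) (𝓝 (exp (binEntropy p⁻¹))) := by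
  have hp0 : 0 < p := by linarith
  have hq : Tendsto (fun q : ℝ => q) (𝓝[>] p) (𝓝 p) := tendsto_nhdsWithin_of_tendsto_nhds tendsto_id
  have hinv : Tendsto (fun q => (q - p)⁻¹) (𝓝[>] p) atTop := by
    refine tendsto_inv_nhdsGT_zero.comp
      (tendsto_nhdsWithin_of_tendsto_nhds_of_eventually_within _ ?_ ?_)
    · simpa using hq.sub_const p
    · filter_upwards [self_mem_nhdsWithin] with q (hq : p < q) using sub_pos.2 hq
  have ha : Tendsto (fun q => p / (q - p)) (𝓝[>] p) atTop := by
    simpa only [div_eq_mul_inv] using hinv.const_mul_atTop hp0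
  have hb : Tendsto (fun q => p * (q - 1) / (q - p)) (𝓝[>] p) atTop := by
    simpa only [div_eq_mul_inv] using
      (tendsto_const_nhds.mul (hq.sub_const 1)).pos_mul_atTop (by nlinarith) hinv
  have hθ : Tendsto (fun q => p / (q - p) / (p / (q - p) + p * (q - 1) / (q - p))) (𝓝[>] p)
      (𝓝 p⁻¹) := by
    refine (hq.inv₀ hp0.ne').congr' ?_
    filter_upwards [self_mem_nhdsWithin] with q (hq : p < q)
    have : q - p ≠ 0 := (sub_pos.2 hq).ne'
    field_simp
    ring
  have hlim := (tendsto_sub_div_rpow_inv_sub_inv hp0).mul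
    (tendsto_Gamma_add_div_Gamma_mul_Gamma_rpow ha hb hθ)
  rw [one_mul] at hlim
  refine hlim.congr' ?_
  filter_upwards [self_mem_nhdsWithin] with q (hq : p < q)
  have ht : 0 < q - p := sub_pos.2 hq
  have hsum : p / (q - p) + p * (q - 1) / (q - p) = p * q / (q - p) := by field_simp; ring
  have hexp : 1 / (p * q / (q - p)) = 1 / p - 1 / q := by
    have : q ≠ 0 := by linarith
    field_simp
  have hq1 : 0 < q - 1 := by linarith
  have hratio :
      0 ≤ Gamma (p * q / (q - p)) / (Gamma (p / (q - p)) * Gamma (p * (q - 1) / (q - p))) :=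
    div_nonneg (Gamma_pos_of_pos (div_pos (mul_pos hp0 (by linarith)) ht)).le
      (mul_pos (Gamma_pos_of_pos (div_pos hp0 ht))
        (Gamma_pos_of_pos (div_pos (mul_pos hp0 hq1) ht))).le
  rw [hsum, hexp, ← mul_rpow (div_pos ht hp0).le hratio, ← mul_div_assoc]

theorem div_rpow_inv_mul_exp_binEntropy_inv {p : ℝ} (hp : 1 < p) :
    (p / (p - 1) / p) ^ (1 / p) * exp (binEntropy p⁻¹) = p / (p - 1) := by
  have hp0 : 0 < p := by linarith
  have hp1 : 0 < p - 1 := by linarith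
  have hsub : 1 - p⁻¹ = (p - 1) / p := by field_simp
  rw [rpow_def_of_pos (by positivity), ← exp_add, binEntropy, hsub, inv_inv, inv_div,
    log_div (div_pos hp0 hp1).ne' hp0.ne', log_div hp0.ne' hp1.ne']
  conv_rhs => rw [← exp_log (div_pos hp0 hp1), log_div hp0.ne' hp1.ne']
  congr 1
  field_simp
  ring

theorem sharp_constant_limit_euclidean_general (n : ℕ) (p α ω : ℝ) (hp : 1 < p) :
    Tendsto (fun q : ℝ =>
        ω ^ (1 + 1 / q - 1 / p) *
          ((p - 1) / (n * (p - 1) - α)) ^ (1 / (p / (p - 1)) + 1 / q) *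
          ((p / (p - 1)) / q) ^ (1 / p) *
          (((q - p) / p * Real.Gamma (p * q / (q - p))) /
              (Real.Gamma (p / (q - p)) * Real.Gamma (p * (q - 1) / (q - p)))) ^ (1 / p - 1 / q))
      (nhdsWithin p (Ioi p)) (nhds (p * ω / (n * (p - 1) - α))) := by
  have hp0 : 0 < p := by linarith
  have hq : Tendsto (fun q : ℝ => q) (𝓝[>] p) (𝓝 p) := tendsto_nhdsWithin_of_tendsto_nhds tendsto_id
  have hinv : Tendsto (fun q : ℝ => 1 / q) (𝓝[>] p) (𝓝 (1 / p)) :=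
    tendsto_const_nhds.div hq hp0.ne'
  have hexp_one : 1 / (p / (p - 1)) + 1 / p = 1 := by field_simp; ring
  have hω : Tendsto (fun q : ℝ => ω ^ (1 + 1 / q - 1 / p)) (𝓝[>] p) (𝓝 ω) := by
    have h := (tendsto_const_nhds (x := ω)).rpow ((tendsto_const_nhds.add hinv).sub_const (1 / p))
      (Or.inr (by rw [add_sub_cancel_right]; exact one_pos))
    rwa [add_sub_cancel_right, rpow_one] at h
  have hD : Tendsto (fun q : ℝ => ((p - 1) / (n * (p - 1) - α)) ^ (1 / (p / (p - 1)) + 1 / q))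
      (𝓝[>] p) (𝓝 ((p - 1) / (n * (p - 1) - α))) := by
    have h := (tendsto_const_nhds (x := (p - 1) / (n * (p - 1) - α))).rpow
      (tendsto_const_nhds.add hinv) (Or.inr (by rw [hexp_one]; exact one_pos))
    rwa [hexp_one, rpow_one] at h
  have hdual : Tendsto (fun q : ℝ => (p / (p - 1) / q) ^ (1 / p)) (𝓝[>] p)
      (𝓝 ((p / (p - 1) / p) ^ (1 / p))) :=
    (tendsto_const_nhds.div hq hp0.ne').rpow tendsto_const_nhds (Or.inr (one_div_pos.2 hp0))
  have hlim := ((hω.mul hD).mul hdual).mul (tendsto_GammaFactor_nhdsGT hp)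
  rw [mul_assoc _ (_ ^ _), div_rpow_inv_mul_exp_binEntropy_inv hp] at hlim
  convert hlim using 2
  have hp1 : p - 1 ≠ 0 := by linarith
  field_simp

theorem sharp_constant_limit_euclidean (n : ℕ) (hn : 1 ≤ n) (p α ω : ℝ) (hp : 1 < p)
    (hα : α < n * (p - 1)) (hω : 0 < ω) :
    Tendsto (fun q : ℝ =>
        ω ^ (1 + 1 / q - 1 / p) *
          ((p - 1) / (n * (p - 1) - α)) ^ (1 / (p / (p - 1)) + 1 / q) *
          ((p / (p - 1)) / q) ^ (1 / p) *
          (((q - p) / p * Real.Gamma (p * q / (q - p))) /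
              (Real.Gamma (p / (q - p)) * Real.Gamma (p * (q - 1) / (q - p)))) ^ (1 / p - 1 / q))
      (nhdsWithin p (Ioi p)) (nhds (p * ω / (n * (p - 1) - α))) :=
  sharp_constant_limit_euclidean_general n p α ω hp
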